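/- arXiv:2410.01537 — 2 statements merged into one kernel-verified Lean document; each statement's English description precedes it below -/
import Mathlib

section
/- Assume d ≥ 1, L ≥ 1, γ > 0, λ > 0. There exists ᾱ > 0 such that for every step size α with 0 < α ≤ ᾱ, the PGD map g_α is differentiable at (0, 0), its Jacobian (the derivative of g_α at (0, 0)) is invertible, and this Jacobian has two real eigenvalues, one lying strictly between 0 and 1 and the other strictly greater than 1. -/
open MeasureTheory ProbabilityTheory Real Filter

noncomputable def erf (u : ℝ) : ℝ := 2 / Real.sqrt Real.pi * ∫ r in (0:ℝ)..u, Real.exp (-r ^ 2)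

noncomputable def zeta (t s : ℝ) : ℝ := ∫ g, erf (t + g) ^ 2 ∂(gaussianReal 0 s.toNNReal)

/-- The reduced risk `R(κ, ν)` on the invariant manifold. -/
noncomputable def Rred (d L : ℕ) (γ lam ε : ℝ) (κ ν : ℝ) : ℝ :=
  γ ^ 2 - 2 * γ ^ 2 * ν * erf (lam * Real.sqrt ((d : ℝ) / 2) * κ /
      Real.sqrt (1 + 2 * lam ^ 2 * γ ^ 2))
    + γ ^ 2 * zeta (lam * Real.sqrt ((d : ℝ) / 2) * κ) (lam ^ 2 * γ ^ 2)
    + ((L : ℝ) - 1) * zeta 0 (lam ^ 2) + ε ^ 2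

/-- Partial derivative `∂κR` of the reduced risk with respect to its first argument. -/
noncomputable def dkR (d L : ℕ) (γ lam ε : ℝ) (κ ν : ℝ) : ℝ :=
  deriv (fun x => Rred d L γ lam ε x ν) κ

/-- Partial derivative `∂νR` of the reduced risk with respect to its second argument. -/
noncomputable def dvR (d L : ℕ) (γ lam ε : ℝ) (κ ν : ℝ) : ℝ :=
  deriv (fun y => Rred d L γ lam ε κ y) ν

/-- The PGD map `g_α`. -/
noncomputable def pgd (d L : ℕ) (γ lam ε α : ℝ) (p : ℝ × ℝ) : ℝ × ℝ :=
  ((p.1 - α * dkR d L γ lam ε p.1 p.2 * (1 - p.1 ^ 2)) /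
      Real.sqrt (1 + α ^ 2 * (dkR d L γ lam ε p.1 p.2) ^ 2 * (1 - p.1 ^ 2)),
   (p.2 - α * dvR d L γ lam ε p.1 p.2 * (1 - p.2 ^ 2)) /
      Real.sqrt (1 + α ^ 2 * (dvR d L γ lam ε p.1 p.2) ^ 2 * (1 - p.2 ^ 2)))

/-- The square `[−1, 1]²`. -/
def sqIcc : Set (ℝ × ℝ) := {p | p.1 ∈ Set.Icc (-1 : ℝ) 1 ∧ p.2 ∈ Set.Icc (-1 : ℝ) 1}

/-! At the origin both partial derivatives of `R` vanish: `erf 0 = 0`, and `∂κζ(0, s) = 0`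
because `erf²` is even and the centered Gaussian is symmetric. So the numerators of `g_α` vanish
there while its normalising square roots equal `1`, and the Jacobian of `g_α` at the origin is
`I - α H`, where `H = [[h, b], [b, 0]]` is the Hessian of `R`. Its entry `b = ∂κ∂νR(0, 0)` is a
nonzero multiple of `γ² λ √d`, so `det H = -b² < 0` and `H` has eigenvalues `μ₁ > 0 > μ₂`. The
Jacobian then has eigenvalues `1 - α μ₁ ∈ (0, 1)` and `1 - α μ₂ > 1` once `α ≤ 1 / (2 μ₁)`. -/

open scoped NNReal

noncomputable def erfDeriv (u : ℝ) : ℝ := 2 / √π * exp (-u ^ 2)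

lemma hasDerivAt_erf (u : ℝ) : HasDerivAt erf (erfDeriv u) u :=
  ((by fun_prop : Continuous fun r : ℝ => exp (-r ^ 2)).integral_hasStrictDerivAt 0 u
    |>.hasDerivAt.const_mul _)

@[fun_prop]
lemma continuous_erf : Continuous erf :=
  continuous_iff_continuousAt.2 fun u => (hasDerivAt_erf u).continuousAt

@[fun_prop]
lemma differentiable_erfDeriv : Differentiable ℝ erfDeriv := by unfold erfDeriv; fun_prop

@[fun_prop]
lemma continuous_erfDeriv : Continuous erfDeriv := differentiable_erfDeriv.continuous

lemma hasDerivAt_erfDeriv (u : ℝ) : HasDerivAt erfDeriv (-2 * u * erfDeriv u) u := by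
  have hsq : HasDerivAt (fun x : ℝ => -x ^ 2) (-(2 * u)) u := by
    simpa using (hasDerivAt_pow 2 u).fun_neg
  exact (hsq.exp.const_mul (2 / √π)).congr_deriv (by simp only [erfDeriv]; ring)

lemma erf_neg (u : ℝ) : erf (-u) = -erf u := by
  have : ∫ r in (0 : ℝ)..-u, exp (-r ^ 2) = -∫ r in (0 : ℝ)..u, exp (-r ^ 2) := by
    have h := intervalIntegral.integral_comp_neg (a := 0) (b := -u) fun r => exp (-r ^ 2)
    simp only [neg_sq, neg_neg, neg_zero] at h
    rw [h, intervalIntegral.integral_symm]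
  simp only [erf, this, mul_neg]

lemma erfDeriv_neg (u : ℝ) : erfDeriv (-u) = erfDeriv u := by simp [erfDeriv]

lemma erfDeriv_zero : erfDeriv 0 = 2 / √π := by simp [erfDeriv]

lemma abs_erf_le_one (u : ℝ) : |erf u| ≤ 1 := by
  wlog hu : 0 ≤ u generalizing u
  · simpa [erf_neg] using this (-u) (by linarith)
  have hint : 0 ≤ ∫ r in (0 : ℝ)..u, exp (-r ^ 2) :=
    intervalIntegral.integral_nonneg hu fun r _ => (exp_pos _).le
  have hle : ∫ r in (0 : ℝ)..u, exp (-r ^ 2) ≤ √π / 2 := by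
    calc ∫ r in (0 : ℝ)..u, exp (-r ^ 2)
        ≤ ∫ r in Set.Ioi (0 : ℝ), exp (-r ^ 2) := by
          rw [intervalIntegral.integral_of_le hu]
          refine setIntegral_mono_set ?_ (.of_forall fun r => (exp_pos _).le)
            (.of_forall fun r hr => hr.1)
          simpa using (integrableOn_Ioi_exp_neg_mul_sq_iff (b := 1)).2 one_pos
      _ = √π / 2 := by simpa using integral_gaussian_Ioi 1
  rw [erf, abs_of_nonneg (by positivity)]
  calc 2 / √π * ∫ r in (0 : ℝ)..u, exp (-r ^ 2) ≤ 2 / √π * (√π / 2) := by gcongr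
    _ = 1 := by field_simp

lemma abs_erfDeriv_le (u : ℝ) : |erfDeriv u| ≤ 2 / √π := by
  rw [erfDeriv, abs_of_nonneg (by positivity)]
  exact mul_le_of_le_one_right (by positivity) (exp_le_one_iff.2 (by nlinarith))

lemma abs_mul_exp_neg_sq_le_one (x : ℝ) : |x| * exp (-x ^ 2) ≤ 1 := by
  have hexp : |x| ≤ exp (x ^ 2) := by
    nlinarith [add_one_le_exp (x ^ 2), sq_abs x, sq_nonneg (|x| - 1)]
  calc |x| * exp (-x ^ 2) ≤ exp (x ^ 2) * exp (-x ^ 2) := by gcongr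
    _ = 1 := by rw [← exp_add]; simp

lemma abs_deriv_erfDeriv_le (u : ℝ) : |-2 * u * erfDeriv u| ≤ 4 / √π := by
  have hc : 0 < 2 / √π := by positivity
  calc |-2 * u * erfDeriv u| = 2 / √π * 2 * (|u| * exp (-u ^ 2)) := by
        simp only [erfDeriv, abs_mul, abs_neg, abs_two, abs_of_pos (exp_pos _), abs_of_pos hc]
        ring
    _ ≤ 2 / √π * 2 * 1 := by gcongr; exact abs_mul_exp_neg_sq_le_one u
    _ = 4 / √π := by ring

lemma hasDerivAt_integral_comp_add {μ : Measure ℝ} [IsFiniteMeasure μ] {f f' : ℝ → ℝ}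
    (hf : ∀ x, HasDerivAt f (f' x) x) (hf'_cont : Continuous f') {C₀ C₁ : ℝ}
    (hf_bdd : ∀ x, |f x| ≤ C₀) (hf'_bdd : ∀ x, |f' x| ≤ C₁) (t : ℝ) :
    HasDerivAt (fun t => ∫ g, f (t + g) ∂μ) (∫ g, f' (t + g) ∂μ) t := by
  have hf_cont : Continuous f := continuous_iff_continuousAt.2 fun x => (hf x).continuousAt
  refine (hasDerivAt_integral_of_dominated_loc_of_deriv_le (bound := fun _ => C₁)
    (F' := fun t g => f' (t + g)) (Metric.ball_mem_nhds t one_pos)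
    (.of_forall fun s => (hf_cont.comp (continuous_const_add s)).aestronglyMeasurable)
    ?_ (hf'_cont.comp (continuous_const_add t)).aestronglyMeasurable
    (.of_forall fun g s _ => hf'_bdd (s + g)) (integrable_const C₁)
    (.of_forall fun g s _ => (hf (s + g)).comp_add_const s g)).2
  exact (integrable_const C₀).mono' (hf_cont.comp (continuous_const_add t)).aestronglyMeasurable
    (.of_forall fun g => hf_bdd (t + g))

lemma integral_gaussianReal_of_odd {v : ℝ≥0} {f : ℝ → ℝ} (hf : Continuous f)
    (hodd : ∀ x, f (-x) = -f x) : ∫ g, f g ∂gaussianReal 0 v = 0 := by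
  have h : ∫ g, f g ∂gaussianReal 0 v = ∫ g, f (-g) ∂gaussianReal 0 v := by
    conv_lhs => rw [← neg_zero, ← gaussianReal_map_neg]
    exact integral_map (by fun_prop) hf.aestronglyMeasurable
  simp only [hodd, integral_neg] at h
  linarith

noncomputable def zetaDeriv (s t : ℝ) : ℝ :=
  ∫ g, 2 * erf (t + g) * erfDeriv (t + g) ∂gaussianReal 0 s.toNNReal

lemma abs_two_mul_erf_mul_erfDeriv_le (u : ℝ) : |2 * erf u * erfDeriv u| ≤ 2 * (2 / √π) := by
  rw [abs_mul, abs_mul, abs_two, mul_assoc]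
  gcongr
  simpa using mul_le_mul (abs_erf_le_one u) (abs_erfDeriv_le u) (abs_nonneg _) zero_le_one

lemma hasDerivAt_zeta (s t : ℝ) : HasDerivAt (fun t => zeta t s) (zetaDeriv s t) t :=
  hasDerivAt_integral_comp_add (f := fun x => erf x ^ 2) (f' := fun x => 2 * erf x * erfDeriv x)
    (fun x => ((hasDerivAt_erf x).pow 2).congr_deriv (by push_cast; ring))
    (by fun_prop) (fun x => by rw [abs_pow]; exact pow_le_one₀ (abs_nonneg _) (abs_erf_le_one x))
    abs_two_mul_erf_mul_erfDeriv_le t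

lemma differentiableAt_zetaDeriv (s t : ℝ) : DifferentiableAt ℝ (zetaDeriv s) t := by
  have hderiv (x : ℝ) : HasDerivAt (fun x => 2 * erf x * erfDeriv x)
      (2 * (erfDeriv x * erfDeriv x + erf x * (-2 * x * erfDeriv x))) x :=
    (((hasDerivAt_erf x).const_mul 2).mul (hasDerivAt_erfDeriv x)).congr_deriv (by ring)
  have hbdd (x : ℝ) : |2 * (erfDeriv x * erfDeriv x + erf x * (-2 * x * erfDeriv x))|
      ≤ 2 * (2 / √π * (2 / √π) + 1 * (4 / √π)) := by
    rw [abs_mul, abs_two]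
    gcongr
    refine (abs_add_le _ _).trans (add_le_add ?_ ?_) <;> rw [abs_mul]
    · exact mul_le_mul (abs_erfDeriv_le x) (abs_erfDeriv_le x) (abs_nonneg _) (by positivity)
    · exact mul_le_mul (abs_erf_le_one x) (abs_deriv_erfDeriv_le x) (abs_nonneg _) zero_le_one
  exact (hasDerivAt_integral_comp_add hderiv (by fun_prop) abs_two_mul_erf_mul_erfDeriv_le hbdd
    t).differentiableAt

lemma zetaDeriv_zero (s : ℝ) : zetaDeriv s 0 = 0 := by
  simp only [zetaDeriv, zero_add]
  exact integral_gaussianReal_of_odd (by fun_prop) fun x => by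
    rw [erf_neg, erfDeriv_neg]; ring

section ReducedRisk

variable (d L : ℕ) (γ lam ε : ℝ)

lemma dvR_eq (κ ν : ℝ) :
    dvR d L γ lam ε κ ν = -(2 * γ ^ 2) * erf (lam * √((d : ℝ) / 2) * κ /
      √(1 + 2 * lam ^ 2 * γ ^ 2)) := by
  have h : HasDerivAt (fun y => Rred d L γ lam ε κ y)
      (-(2 * γ ^ 2 * 1 * erf (lam * √((d : ℝ) / 2) * κ / √(1 + 2 * lam ^ 2 * γ ^ 2)))) ν := by
    simp only [Rred]
    exact ((((hasDerivAt_id ν).const_mul _).mul_const _).const_sub _).add_const _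
      |>.add_const _ |>.add_const _
  rw [dvR, h.deriv]; ring

lemma dkR_eq (κ ν : ℝ) :
    dkR d L γ lam ε κ ν =
      -(2 * γ ^ 2) * (ν * (erfDeriv (lam * √((d : ℝ) / 2) * κ / √(1 + 2 * lam ^ 2 * γ ^ 2)) *
          (lam * √((d : ℝ) / 2) / √(1 + 2 * lam ^ 2 * γ ^ 2))))
      + γ ^ 2 * (lam * √((d : ℝ) / 2)) *
          zetaDeriv (lam ^ 2 * γ ^ 2) (lam * √((d : ℝ) / 2) * κ) := by
  set A := lam * √((d : ℝ) / 2)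
  set Q := √(1 + 2 * lam ^ 2 * γ ^ 2)
  have herf : HasDerivAt (fun x => erf (A * x / Q)) (erfDeriv (A * κ / Q) * (A / Q)) κ :=
    (hasDerivAt_erf _).comp κ ((hasDerivAt_const_mul A).div_const Q)
  have hzeta : HasDerivAt (fun x => zeta (A * x) (lam ^ 2 * γ ^ 2))
      (zetaDeriv (lam ^ 2 * γ ^ 2) (A * κ) * A) κ :=
    (hasDerivAt_zeta _ _).comp κ (hasDerivAt_const_mul A)
  have h : HasDerivAt (fun x => Rred d L γ lam ε x ν)
      (0 - 2 * γ ^ 2 * ν * (erfDeriv (A * κ / Q) * (A / Q))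
        + γ ^ 2 * (zetaDeriv (lam ^ 2 * γ ^ 2) (A * κ) * A)) κ := by
    simp only [Rred]
    exact (((hasDerivAt_const κ _).sub (herf.const_mul _)).add (hzeta.const_mul _)).add_const _
      |>.add_const _
  rw [dkR, h.deriv]; ring

end ReducedRisk

open ContinuousLinearMap

lemma HasDerivAt.comp_fst {k : ℝ → ℝ} {k' : ℝ} {p : ℝ × ℝ} (hk : HasDerivAt k k' p.1) :
    HasFDerivAt (fun q : ℝ × ℝ => k q.1) (k' • fst ℝ ℝ ℝ) p :=
  hk.comp_hasFDerivAt p hasFDerivAt_fst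

lemma hasFDerivAt_snd_mul_comp_fst {k : ℝ → ℝ} (hk : DifferentiableAt ℝ k 0) :
    HasFDerivAt (fun p : ℝ × ℝ => p.2 * k p.1) (k 0 • snd ℝ ℝ ℝ) (0, 0) :=
  (hasFDerivAt_snd.mul hk.hasDerivAt.comp_fst).congr_fderiv (by ext <;> simp)

section ReducedRiskHessian

variable (d L : ℕ) (γ lam ε : ℝ)

/-- `d2kkR = ∂κ²R(0, 0)` and `d2kvR = ∂κ∂νR(0, 0)`. -/
noncomputable def d2kkR : ℝ :=
  γ ^ 2 * (lam * √((d : ℝ) / 2)) ^ 2 * deriv (zetaDeriv (lam ^ 2 * γ ^ 2)) 0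

noncomputable def d2kvR : ℝ :=
  -(2 * γ ^ 2) * (2 / √π * (lam * √((d : ℝ) / 2) / √(1 + 2 * lam ^ 2 * γ ^ 2)))

lemma hasFDerivAt_dkR :
    HasFDerivAt (fun p : ℝ × ℝ => dkR d L γ lam ε p.1 p.2)
      (d2kkR d γ lam • fst ℝ ℝ ℝ + d2kvR d γ lam • snd ℝ ℝ ℝ) (0, 0) := by
  simp only [dkR_eq, d2kkR, d2kvR]
  set A := lam * √((d : ℝ) / 2)
  set Q := √(1 + 2 * lam ^ 2 * γ ^ 2)
  have herf := hasFDerivAt_snd_mul_comp_fst (k := fun x => erfDeriv (A * x / Q) * (A / Q))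
    (by fun_prop)
  have hzeta := ((differentiableAt_zetaDeriv (lam ^ 2 * γ ^ 2) (A * 0)).hasDerivAt.comp 0
    (hasDerivAt_const_mul A)).comp_fst (p := (0, 0))
  refine ((herf.const_mul _).add (hzeta.const_mul _)).congr_fderiv ?_
  ext
  · simp; ring
  · simp [erfDeriv_zero]

lemma hasFDerivAt_dvR :
    HasFDerivAt (fun p : ℝ × ℝ => dvR d L γ lam ε p.1 p.2) (d2kvR d γ lam • fst ℝ ℝ ℝ) (0, 0) := by
  simp only [dvR_eq, d2kvR]
  set A := lam * √((d : ℝ) / 2)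
  set Q := √(1 + 2 * lam ^ 2 * γ ^ 2)
  refine ((((hasDerivAt_erf _).comp 0 ((hasDerivAt_const_mul A).div_const Q)).const_mul _)
    |>.comp_fst (p := (0, 0))).congr_fderiv ?_
  ext <;> simp [erfDeriv_zero]

lemma dkR_zero : dkR d L γ lam ε 0 0 = 0 := by simp [dkR_eq, zetaDeriv_zero]

lemma dvR_zero : dvR d L γ lam ε 0 0 = 0 := by simp [dvR_eq, erf]

end ReducedRiskHessian

lemma HasFDerivAt.pgdStep_of_eq_zero {E : Type*} [NormedAddCommGroup E] [NormedSpace ℝ E]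
    {F φ : E → ℝ} {F' φ' : E →L[ℝ] ℝ} {p₀ : E} (α : ℝ) (hF : HasFDerivAt F F' p₀)
    (hφ : HasFDerivAt φ φ' p₀) (hF₀ : F p₀ = 0) (hφ₀ : φ p₀ = 0) :
    HasFDerivAt (fun p => (φ p - α * F p * (1 - φ p ^ 2)) /
      √(1 + α ^ 2 * F p ^ 2 * (1 - φ p ^ 2))) (φ' - α • F') p₀ := by
  have hnum : HasFDerivAt (fun p => φ p - α * F p * (1 - φ p ^ 2)) (φ' - α • F') p₀ :=
    (hφ.sub ((hF.const_mul α).mul ((hφ.pow 2).const_sub 1))).congr_fderiv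
      (by ext; simp [hF₀, hφ₀])
  have hden : DifferentiableAt ℝ (fun p => (√(1 + α ^ 2 * F p ^ 2 * (1 - φ p ^ 2)))⁻¹) p₀ := by
    have hF := hF.differentiableAt
    have hφ := hφ.differentiableAt
    exact (DifferentiableAt.sqrt (by fun_prop) (by simp [hF₀])).inv (by simp [hF₀])
  simp only [div_eq_mul_inv]
  exact (hnum.mul hden.hasFDerivAt).congr_fderiv (by ext; simp [hF₀, hφ₀])

noncomputable def saddleHessian (h b : ℝ) : ℝ × ℝ →L[ℝ] ℝ × ℝ :=
  (h • fst ℝ ℝ ℝ + b • snd ℝ ℝ ℝ).prod (b • fst ℝ ℝ ℝ)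

lemma saddleHessian_apply (h b u v : ℝ) :
    saddleHessian h b (u, v) = (h * u + b * v, b * u) := by
  simp [saddleHessian]

lemma exists_pos_neg_add_eq_mul_eq_neg_sq (h : ℝ) {b : ℝ} (hb : b ≠ 0) :
    ∃ μ₁ μ₂ : ℝ, 0 < μ₁ ∧ μ₂ < 0 ∧ μ₁ + μ₂ = h ∧ μ₁ * μ₂ = -b ^ 2 := by
  have hb2 : 0 < b ^ 2 := by positivity
  set Δ := √(h ^ 2 + 4 * b ^ 2)
  have hΔ : Δ ^ 2 = h ^ 2 + 4 * b ^ 2 := sq_sqrt (by positivity)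
  have hΔh : |h| < Δ := by
    rw [← sqrt_sq_eq_abs]; exact sqrt_lt_sqrt (sq_nonneg h) (by linarith)
  refine ⟨(h + Δ) / 2, (h - Δ) / 2, ?_, ?_, by ring, by linear_combination -hΔ / 4⟩ <;>
    linarith [neg_abs_le h, le_abs_self h]

lemma saddleHessian_eigenvector {h b μ μ' : ℝ} (hsum : μ + μ' = h) (hprod : μ * μ' = -b ^ 2) :
    saddleHessian h b (μ, b) = μ • (μ, b) := by
  rw [saddleHessian_apply, Prod.smul_mk, smul_eq_mul, smul_eq_mul, Prod.mk.injEq]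
  exact ⟨by linear_combination -μ * hsum + hprod, by ring⟩

lemma injective_id_sub_smul_saddleHessian {h b μ₁ μ₂ α : ℝ} (hsum : μ₁ + μ₂ = h)
    (hprod : μ₁ * μ₂ = -b ^ 2) (h₁ : α * μ₁ ≠ 1) (h₂ : α * μ₂ ≠ 1) :
    Function.Injective (ContinuousLinearMap.id ℝ (ℝ × ℝ) - α • saddleHessian h b) := by
  refine (injective_iff_map_eq_zero _).2 fun ⟨u, v⟩ huv => ?_
  simp only [sub_apply, coe_id', id_eq, smul_apply, saddleHessian_apply, Prod.smul_mk,
    smul_eq_mul, Prod.mk_sub_mk, Prod.mk_eq_zero] at huv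
  obtain ⟨hu, hv⟩ := huv
  have hdet : u * ((1 - α * μ₁) * (1 - α * μ₂)) = 0 := by
    linear_combination hu + α * b * hv - α * u * hsum + α ^ 2 * u * hprod
  have hu0 : u = 0 := by
    simpa [sub_eq_zero, Ne.symm h₁, Ne.symm h₂] using hdet
  subst hu0
  simp_all

lemma exists_stepSize_spectrum_id_sub_smul_saddleHessian (h : ℝ) {b : ℝ} (hb : b ≠ 0) :
    ∃ abar : ℝ, 0 < abar ∧ ∀ α : ℝ, 0 < α → α ≤ abar →
      Function.Bijective (ContinuousLinearMap.id ℝ (ℝ × ℝ) - α • saddleHessian h b) ∧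
      ∃ (μ₁ μ₂ : ℝ) (v₁ v₂ : ℝ × ℝ), 0 < μ₁ ∧ μ₁ < 1 ∧ 1 < μ₂ ∧ v₁ ≠ 0 ∧ v₂ ≠ 0 ∧
        (ContinuousLinearMap.id ℝ (ℝ × ℝ) - α • saddleHessian h b) v₁ = μ₁ • v₁ ∧
        (ContinuousLinearMap.id ℝ (ℝ × ℝ) - α • saddleHessian h b) v₂ = μ₂ • v₂ := by
  obtain ⟨μ₁, μ₂, hμ₁, hμ₂, hsum, hprod⟩ := exists_pos_neg_add_eq_mul_eq_neg_sq h hb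
  refine ⟨1 / (2 * μ₁), by positivity, fun α hα hle => ?_⟩
  have hαμ₁ : α * μ₁ ≤ 1 / 2 :=
    calc α * μ₁ ≤ 1 / (2 * μ₁) * μ₁ := by gcongr
      _ = 1 / 2 := by field_simp
  have hαμ₂ : α * μ₂ < 0 := mul_neg_of_pos_of_neg hα hμ₂
  have hinj := injective_id_sub_smul_saddleHessian (α := α) hsum hprod (by linarith) (by linarith)
  have hv : ((μ₁, b) : ℝ × ℝ) ≠ 0 ∧ ((μ₂, b) : ℝ × ℝ) ≠ 0 := by simp [hb]
  refine ⟨⟨hinj, LinearMap.injective_iff_surjective.mp hinj⟩, 1 - α * μ₁, 1 - α * μ₂, _, _,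
    by linarith, by nlinarith, by linarith, hv.1, hv.2, ?_, ?_⟩
  · simp [saddleHessian_eigenvector hsum hprod, sub_smul, mul_assoc]
  · simp [saddleHessian_eigenvector ((add_comm _ _).trans hsum) ((mul_comm _ _).trans hprod),
      sub_smul, mul_assoc]

lemma hasFDerivAt_pgd (d L : ℕ) (γ lam ε α : ℝ) :
    HasFDerivAt (pgd d L γ lam ε α)
      (ContinuousLinearMap.id ℝ (ℝ × ℝ) - α • saddleHessian (d2kkR d γ lam) (d2kvR d γ lam))
      (0, 0) :=
  ((hasFDerivAt_dkR d L γ lam ε).pgdStep_of_eq_zero α hasFDerivAt_fst (dkR_zero ..) rfl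
    |>.prodMk <|
      (hasFDerivAt_dvR d L γ lam ε).pgdStep_of_eq_zero α hasFDerivAt_snd (dvR_zero ..) rfl)
    |>.congr_fderiv (by ext <;> simp [saddleHessian])

theorem stmt12_general (d L : ℕ) (hd : 1 ≤ d) (γ lam ε : ℝ)
    (hγ : 0 < γ) (hlam : 0 < lam) :
    ∃ abar : ℝ, 0 < abar ∧ ∀ α : ℝ, 0 < α → α ≤ abar →
      DifferentiableAt ℝ (pgd d L γ lam ε α) (0, 0) ∧
      Function.Bijective (fderiv ℝ (pgd d L γ lam ε α) (0, 0)) ∧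
      ∃ (μ₁ μ₂ : ℝ) (v₁ v₂ : ℝ × ℝ), 0 < μ₁ ∧ μ₁ < 1 ∧ 1 < μ₂ ∧
        v₁ ≠ 0 ∧ v₂ ≠ 0 ∧
        fderiv ℝ (pgd d L γ lam ε α) (0, 0) v₁ = μ₁ • v₁ ∧
        fderiv ℝ (pgd d L γ lam ε α) (0, 0) v₂ = μ₂ • v₂ := by
  have hb : d2kvR d γ lam < 0 := by
    rw [d2kvR, neg_mul, neg_lt_zero]
    positivity
  obtain ⟨abar, habar, hspec⟩ := exists_stepSize_spectrum_id_sub_smul_saddleHessian _ hb.ne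
  refine ⟨abar, habar, fun α hα hle => ?_⟩
  have hJ := hasFDerivAt_pgd d L γ lam ε α
  rw [hJ.fderiv]
  exact ⟨hJ.differentiableAt, hspec α hα hle⟩

/-- For small enough step size, the PGD map is differentiable at `(0,0)`, its Jacobian
there is invertible, and this Jacobian has two real eigenvalues, one strictly between
`0` and `1` and the other strictly greater than `1`. -/
theorem stmt12 (d L : ℕ) (hd : 1 ≤ d) (hL : 1 ≤ L) (γ lam ε : ℝ)
    (hγ : 0 < γ) (hlam : 0 < lam) (hε : 0 ≤ ε) :
    ∃ abar : ℝ, 0 < abar ∧ ∀ α : ℝ, 0 < α → α ≤ abar →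
      DifferentiableAt ℝ (pgd d L γ lam ε α) (0, 0) ∧
      Function.Bijective (fderiv ℝ (pgd d L γ lam ε α) (0, 0)) ∧
      ∃ (μ₁ μ₂ : ℝ) (v₁ v₂ : ℝ × ℝ), 0 < μ₁ ∧ μ₁ < 1 ∧ 1 < μ₂ ∧
        v₁ ≠ 0 ∧ v₂ ≠ 0 ∧
        fderiv ℝ (pgd d L γ lam ε α) (0, 0) v₁ = μ₁ • v₁ ∧
        fderiv ℝ (pgd d L γ lam ε α) (0, 0) v₂ = μ₂ • v₂ :=
  stmt12_general d L hd γ lam ε hγ hlam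
end

section
/- Assume d ≥ 1, L ≥ 1, γ > 0, λ > 0. There exists ᾱ > 0 such that for every step size α with 0 < α ≤ ᾱ, the PGD map g_α is differentiable at every point of [−1, 1]² and its Jacobian (derivative) at every point of [−1, 1]² is invertible. -/
/-!
At `α = 0` the PGD map is the identity. The partial derivatives of `R` are `C¹`: `erf` is smooth,
and the Gaussian smoothing `t ↦ E[erf(t + G)²]` is `C²` because `erf²` has bounded derivatives up
to order two, which allows differentiation under the integral. Hence `(α, p) ↦ g_α(p)` is `C¹`
near `{0} × [-1, 1]²`, so its Jacobian in `p` depends continuously on `(α, p)` and is the identity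
at `α = 0`. Invertible operators form an open set, and compactness of the square turns this
pointwise statement into a uniform step-size bound `ᾱ`.
-/

open MeasureTheory ProbabilityTheory Real Filter

open scoped ContDiff Topology

section TranslatedIntegral

variable {μ : Measure ℝ} [IsFiniteMeasure μ] {f : ℝ → ℝ}

lemma continuous_integral_comp_add (hf : Continuous f) {C : ℝ} (hC : ∀ x, ‖f x‖ ≤ C) :
    Continuous fun t => ∫ g, f (t + g) ∂μ :=
  continuous_of_dominated (fun t => (hf.comp (continuous_const_add t)).aestronglyMeasurable)
    (fun t => .of_forall fun g => hC (t + g)) (integrable_const C)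
    (.of_forall fun g => hf.comp (continuous_add_const g))

lemma hasDerivAt_integral_comp_add_s13 (hf : Differentiable ℝ f) {C C' : ℝ}
    (hC : ∀ x, ‖f x‖ ≤ C) (hC' : ∀ x, ‖deriv f x‖ ≤ C') (t : ℝ) :
    HasDerivAt (fun t => ∫ g, f (t + g) ∂μ) (∫ g, deriv f (t + g) ∂μ) t :=
  (hasDerivAt_integral_of_dominated_loc_of_deriv_le (bound := fun _ => C')
    (Metric.ball_mem_nhds t one_pos)
    (.of_forall fun s => (hf.continuous.comp (continuous_const_add s)).aestronglyMeasurable)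
    (Integrable.mono' (integrable_const C)
      (hf.continuous.comp (continuous_const_add t)).aestronglyMeasurable
      (.of_forall fun g => hC (t + g)))
    ((measurable_deriv f).comp (measurable_const_add t)).aestronglyMeasurable
    (.of_forall fun g s _ => hC' (s + g)) (integrable_const C')
    (.of_forall fun g s _ => (hf (s + g)).hasDerivAt.comp_add_const s g)).2

theorem contDiff_integral_comp_add {n : ℕ} (hf : ContDiff ℝ n f)
    (hb : ∀ k ≤ n, ∃ C, ∀ x, ‖iteratedDeriv k f x‖ ≤ C) :
    ContDiff ℝ n fun t => ∫ g, f (t + g) ∂μ := by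
  induction n generalizing f with
  | zero =>
    obtain ⟨C, hC⟩ := hb 0 le_rfl
    simp only [iteratedDeriv_zero] at hC
    exact contDiff_zero.2 (continuous_integral_comp_add hf.continuous hC)
  | succ n ih =>
    rw [Nat.cast_succ, contDiff_succ_iff_deriv] at hf ⊢
    obtain ⟨C, hC⟩ := hb 0 (Nat.zero_le _)
    obtain ⟨C', hC'⟩ := hb 1 (by omega)
    simp only [iteratedDeriv_zero, iteratedDeriv_one] at hC hC'
    have hderiv := hasDerivAt_integral_comp_add_s13 (μ := μ) hf.1 hC hC'
    refine ⟨fun t => (hderiv t).differentiableAt, by simp, ?_⟩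
    rw [funext fun t => (hderiv t).deriv]
    exact ih hf.2.2 fun k hk => by simpa [← iteratedDeriv_succ'] using hb (k + 1) (by omega)

end TranslatedIntegral

section PartialDeriv

variable {F : Type*} [NormedAddCommGroup F] [NormedSpace ℝ F] {f : ℝ × ℝ → F} {n : ℕ}

lemma contDiff_deriv_fst (hf : ContDiff ℝ (n + 1) f) :
    ContDiff ℝ n fun p : ℝ × ℝ => deriv (fun x => f (x, p.2)) p.1 := by
  have h (p : ℝ × ℝ) : deriv (fun x => f (x, p.2)) p.1 = fderiv ℝ f p (1, 0) :=
    ((hf.differentiable (by simp) p).hasFDerivAt.comp_hasDerivAt p.1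
      ((hasDerivAt_id _).prodMk (hasDerivAt_const _ _))).deriv
  simp_rw [h]
  exact (hf.fderiv_right le_rfl).clm_apply contDiff_const

lemma contDiff_deriv_snd (hf : ContDiff ℝ (n + 1) f) :
    ContDiff ℝ n fun p : ℝ × ℝ => deriv (fun y => f (p.1, y)) p.2 := by
  have h (p : ℝ × ℝ) : deriv (fun y => f (p.1, y)) p.2 = fderiv ℝ f p (0, 1) :=
    ((hf.differentiable (by simp) p).hasFDerivAt.comp_hasDerivAt p.2
      ((hasDerivAt_const _ _).prodMk (hasDerivAt_id _))).deriv
  simp_rw [h]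
  exact (hf.fderiv_right le_rfl).clm_apply contDiff_const

end PartialDeriv

theorem IsCompact.eventually_bijective_fderiv_of_eq_id {E : Type*} [NormedAddCommGroup E]
    [NormedSpace ℝ E] [CompleteSpace E] {Φ : ℝ × E → E} {K : Set E} (hK : IsCompact K)
    (hΦ : ∀ x ∈ K, ContDiffAt ℝ 1 Φ (0, x)) (hid : ∀ x, Φ (0, x) = x) :
    ∀ᶠ α in 𝓝 0, ∀ x ∈ K, DifferentiableAt ℝ (fun y => Φ (α, y)) x ∧
      Function.Bijective (fderiv ℝ (fun y => Φ (α, y)) x) := by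
  refine hK.eventually_forall_of_forall_eventually fun x hx => ?_
  set J : ℝ × E → E →L[ℝ] E := fun q =>
    (fderiv ℝ Φ q).comp (ContinuousLinearMap.inr ℝ ℝ E)
  have hslice {q : ℝ × E} (hq : DifferentiableAt ℝ Φ q) :
      HasFDerivAt (fun y => Φ (q.1, y)) (J q) q.2 :=
    hq.hasFDerivAt.comp q.2 (hasFDerivAt_prodMk_right q.1 q.2)
  have hJx : J (0, x) = 1 := by
    refine (hslice ((hΦ x hx).differentiableAt one_ne_zero)).unique ?_
    simp only [hid]
    exact hasFDerivAt_id x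
  have hJ : ContinuousAt J (0, x) :=
    ((hΦ x hx).continuousAt_fderiv one_ne_zero).clm_comp continuousAt_const
  have hunit : ∀ᶠ q in 𝓝 (0, x), IsUnit (J q) :=
    hJ.eventually_mem (hJx ▸ Units.isOpen.mem_nhds isUnit_one)
  filter_upwards [(hΦ x hx).eventually (by simp), hunit] with q hq hJq
  have hq' := hslice (hq.differentiableAt one_ne_zero)
  exact ⟨hq'.differentiableAt, hq'.fderiv ▸ ContinuousLinearMap.isUnit_iff_bijective.1 hJq⟩

lemma hasDerivAt_erf_s13 (u : ℝ) : HasDerivAt erf (2 / √π * exp (-u ^ 2)) u := by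
  have hc : Continuous fun r : ℝ => exp (-r ^ 2) := by fun_prop
  exact (intervalIntegral.integral_hasDerivAt_right (hc.intervalIntegrable 0 u)
    (hc.stronglyMeasurableAtFilter _ _) hc.continuousAt).const_mul _

lemma deriv_erf : deriv erf = fun u => 2 / √π * exp (-u ^ 2) :=
  funext fun u => (hasDerivAt_erf_s13 u).deriv

lemma contDiff_erf : ContDiff ℝ ∞ erf :=
  contDiff_infty_iff_deriv.2
    ⟨fun u => (hasDerivAt_erf_s13 u).differentiableAt, deriv_erf ▸ by fun_prop⟩

lemma abs_erf_le_two (u : ℝ) : |erf u| ≤ 2 := by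
  have hint : |∫ r in (0:ℝ)..u, exp (-r ^ 2)| ≤ √π :=
    calc |∫ r in (0:ℝ)..u, exp (-r ^ 2)| ≤ ∫ r in Set.uIoc 0 u, exp (-r ^ 2) := by
          simpa [abs_of_pos (exp_pos _)] using
            intervalIntegral.norm_integral_le_integral_norm_uIoc (f := fun r => exp (-r ^ 2))
      _ ≤ ∫ r, exp (-r ^ 2) :=
          setIntegral_le_integral (by simpa using integrable_exp_neg_mul_sq one_pos)
            (.of_forall fun r => (exp_pos _).le)
      _ = √π := by simpa using integral_gaussian 1
  rw [erf, abs_mul, abs_of_pos (by positivity)]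
  calc 2 / √π * |∫ r in (0:ℝ)..u, exp (-r ^ 2)| ≤ 2 / √π * √π := by gcongr
    _ = 2 := div_mul_cancel₀ 2 (by positivity)

lemma one_le_sqrt_pi : 1 ≤ √π :=
  one_le_sqrt.2 (by linarith [pi_gt_three])

lemma exp_neg_sq_le_one (u : ℝ) : exp (-u ^ 2) ≤ 1 :=
  exp_le_one_iff.2 (by nlinarith)

lemma abs_two_mul_mul_exp_neg_sq_le_one (u : ℝ) : |2 * u * exp (-u ^ 2)| ≤ 1 := by
  have h : 2 * |u| ≤ exp (u ^ 2) := by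
    nlinarith [add_one_le_exp (u ^ 2), sq_nonneg (|u| - 1), sq_abs u]
  rw [abs_mul, abs_of_pos (exp_pos _), abs_mul, abs_two, exp_neg]
  rwa [mul_inv_le_iff₀ (exp_pos _), one_mul]

lemma hasDerivAt_erf_sq (u : ℝ) :
    HasDerivAt (fun u => erf u ^ 2) (4 / √π * (erf u * exp (-u ^ 2))) u :=
  ((hasDerivAt_erf_s13 u).fun_pow 2).congr_deriv (by norm_num; ring)

lemma hasDerivAt_erf_mul_exp_neg_sq (u : ℝ) :
    HasDerivAt (fun u => erf u * exp (-u ^ 2))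
      (2 / √π * exp (-u ^ 2) ^ 2 - erf u * (2 * u * exp (-u ^ 2))) u :=
  ((hasDerivAt_erf_s13 u).fun_mul (hasDerivAt_pow 2 u).fun_neg.exp).congr_deriv (by norm_num; ring)

lemma exists_bound_iteratedDeriv_erf_sq :
    ∀ k ≤ 2, ∃ C, ∀ u, ‖iteratedDeriv k (fun u => erf u ^ 2) u‖ ≤ C := by
  have hπ : 4 / √π ≤ 4 := div_le_self (by norm_num) one_le_sqrt_pi
  have hπ' : 2 / √π ≤ 2 := div_le_self (by norm_num) one_le_sqrt_pi
  have hexp u := exp_neg_sq_le_one u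
  have hexp' u := abs_two_mul_mul_exp_neg_sq_le_one u
  have herf u := abs_erf_le_two u
  have hd1 : deriv (fun u => erf u ^ 2) = fun u => 4 / √π * (erf u * exp (-u ^ 2)) :=
    funext fun u => (hasDerivAt_erf_sq u).deriv
  have hd2 : deriv (fun u => 4 / √π * (erf u * exp (-u ^ 2))) = fun u =>
      4 / √π * (2 / √π * exp (-u ^ 2) ^ 2 - erf u * (2 * u * exp (-u ^ 2))) :=
    funext fun u => ((hasDerivAt_erf_mul_exp_neg_sq u).const_mul _).deriv
  intro k hk
  interval_cases k
  · refine ⟨4, fun u => ?_⟩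
    simp only [iteratedDeriv_zero, norm_pow, Real.norm_eq_abs]
    nlinarith [herf u, abs_nonneg (erf u)]
  · refine ⟨8, fun u => ?_⟩
    rw [iteratedDeriv_one, hd1, Real.norm_eq_abs, abs_mul, abs_mul, abs_of_pos (exp_pos _),
      abs_of_pos (by positivity)]
    calc 4 / √π * (|erf u| * exp (-u ^ 2))
        ≤ 4 * (2 * 1) := by gcongr; exacts [herf u, hexp u]
      _ = 8 := by norm_num
  · refine ⟨16, fun u => ?_⟩
    rw [iteratedDeriv_succ, iteratedDeriv_one, hd1, hd2, Real.norm_eq_abs, abs_mul,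
      abs_of_pos (by positivity)]
    have hA : |2 / √π * exp (-u ^ 2) ^ 2| ≤ 2 := by
      rw [abs_of_nonneg (by positivity)]
      calc 2 / √π * exp (-u ^ 2) ^ 2
          ≤ 2 * 1 := by gcongr; exact pow_le_one₀ (by positivity) (hexp u)
        _ = 2 := by norm_num
    have hB : |erf u * (2 * u * exp (-u ^ 2))| ≤ 2 := by
      rw [abs_mul]
      nlinarith [herf u, hexp' u, abs_nonneg (erf u), abs_nonneg (2 * u * exp (-u ^ 2))]
    calc 4 / √π * |2 / √π * exp (-u ^ 2) ^ 2 - erf u * (2 * u * exp (-u ^ 2))|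
        ≤ 4 * (2 + 2) := by gcongr; exact (abs_sub _ _).trans (add_le_add hA hB)
      _ = 16 := by norm_num

lemma contDiff_zeta (s : ℝ) : ContDiff ℝ 2 fun t => zeta t s :=
  contDiff_integral_comp_add ((contDiff_infty.1 contDiff_erf 2).pow 2)
    exists_bound_iteratedDeriv_erf_sq

lemma contDiff_Rred (d L : ℕ) (γ lam ε : ℝ) :
    ContDiff ℝ 2 fun p : ℝ × ℝ => Rred d L γ lam ε p.1 p.2 := by
  have herf : ContDiff ℝ 2 erf := contDiff_infty.1 contDiff_erf 2
  have hzeta := contDiff_zeta (lam ^ 2 * γ ^ 2)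
  unfold Rred
  fun_prop

lemma contDiffAt_pgd_uncurry (d L : ℕ) (γ lam ε : ℝ) {α : ℝ} {p : ℝ × ℝ}
    (h₁ : 0 < 1 + α ^ 2 * dkR d L γ lam ε p.1 p.2 ^ 2 * (1 - p.1 ^ 2))
    (h₂ : 0 < 1 + α ^ 2 * dvR d L γ lam ε p.1 p.2 ^ 2 * (1 - p.2 ^ 2)) :
    ContDiffAt ℝ 1 (fun q : ℝ × ℝ × ℝ => pgd d L γ lam ε q.1 q.2) (α, p) := by
  have hK : ContDiff ℝ 1 fun p : ℝ × ℝ => dkR d L γ lam ε p.1 p.2 :=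
    contDiff_deriv_fst (contDiff_Rred d L γ lam ε)
  have hV : ContDiff ℝ 1 fun p : ℝ × ℝ => dvR d L γ lam ε p.1 p.2 :=
    contDiff_deriv_snd (contDiff_Rred d L γ lam ε)
  unfold pgd
  fun_prop (disch := positivity)

lemma pgd_zero (d L : ℕ) (γ lam ε : ℝ) (p : ℝ × ℝ) : pgd d L γ lam ε 0 p = p := by
  simp [pgd]

lemma isCompact_sqIcc : IsCompact sqIcc :=
  isCompact_Icc.prod isCompact_Icc

theorem stmt13_general (d L : ℕ) (γ lam ε : ℝ) :
    ∃ abar : ℝ, 0 < abar ∧ ∀ α : ℝ, 0 < α → α ≤ abar → ∀ p ∈ sqIcc,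
      DifferentiableAt ℝ (pgd d L γ lam ε α) p ∧
      Function.Bijective (fderiv ℝ (pgd d L γ lam ε α) p) := by
  have hsmall := isCompact_sqIcc.eventually_bijective_fderiv_of_eq_id
    (Φ := fun q => pgd d L γ lam ε q.1 q.2)
    (fun p _ => contDiffAt_pgd_uncurry d L γ lam ε (by simp) (by simp)) (pgd_zero d L γ lam ε)
  obtain ⟨δ, hδ, hball⟩ := Metric.eventually_nhds_iff.1 hsmall
  refine ⟨δ / 2, half_pos hδ, fun α hα hαδ => hball ?_⟩
  rw [Real.dist_eq, sub_zero, abs_of_pos hα]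
  linarith

/-- For small enough step size, the PGD map is differentiable at every point of
`[−1,1]²` with invertible Jacobian there. -/
theorem stmt13 (d L : ℕ) (hd : 1 ≤ d) (hL : 1 ≤ L) (γ lam ε : ℝ)
    (hγ : 0 < γ) (hlam : 0 < lam) (hε : 0 ≤ ε) :
    ∃ abar : ℝ, 0 < abar ∧ ∀ α : ℝ, 0 < α → α ≤ abar → ∀ p ∈ sqIcc,
      DifferentiableAt ℝ (pgd d L γ lam ε α) p ∧
      Function.Bijective (fderiv ℝ (pgd d L γ lam ε α) p) :=
  stmt13_general d L γ lam ε
end
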